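/- arXiv:2207.08483 — 4 statements merged into one kernel-verified Lean document; each statement's English description precedes it below -/
import Mathlib

section
/- Let p, q > 1 with 1/p + 1/q = 1 (or p = ∞, q = 1). Let Ω = D × [0,T] with D = [0,1]. Let u be the entropy solution of the scalar conservation law u_t + f(u)_x = 0 with flux f having Lipschitz constant L_f, and let v ∈ L^q(Ω). Define the Kruzkhov entropy residual R(v,φ,c) = −∫∫_Ω (|v−c| ∂_t φ + Q(v,c) ∂_x φ) dx dt, where Q(u,c) = sgn(u−c)(f(u)−f(c)). Then for every test function φ ∈ W_0^{1,∞}(Ω) and every c ∈ ℝ: R(v,φ,c) ≤ (1 + 3L_f) · |φ|_{W^{1,p}(Ω)} · ‖u − v‖_{L^q(Ω)}. -/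
open MeasureTheory ENNReal

/-- Kruzkhov entropy flux `Q(u,c) = sgn(u-c)(f(u)-f(c))`. -/
noncomputable def kruzkhovQ (f : ℝ → ℝ) (u c : ℝ) : ℝ :=
  Real.sign (u - c) * (f u - f c)

/-- The Kruzkhov entropy residual
`R(v, φ, c) = -∫∫_Ω (|v - c| ∂ₜφ + Q(v,c) ∂ₓφ) dx dt`, where a point `z : ℝ × ℝ`
is `z = (x, t)` and `φt, φx` denote the partial derivatives of the test function `φ`. -/
noncomputable def entropyResidual (f : ℝ → ℝ) (Ω : Set (ℝ × ℝ))
    (v φt φx : ℝ × ℝ → ℝ) (c : ℝ) : ℝ :=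
  -∫ z in Ω, (|v z - c| * φt z + kruzkhovQ f (v z) c * φx z)

lemma measurable_realSign : Measurable Real.sign := by
  have h : Real.sign = fun r : ℝ => if r < 0 then (-1:ℝ) else if 0 < r then 1 else 0 := rfl
  rw [h]
  exact Measurable.ite (measurableSet_lt measurable_id measurable_const) measurable_const
    (Measurable.ite (measurableSet_lt measurable_const measurable_id) measurable_const
      measurable_const)

lemma abs_realSign_le (r : ℝ) : |Real.sign r| ≤ 1 := by
  rcases Real.sign_apply_eq r with h|h|h <;> rw [h] <;> norm_num

lemma kruzkhovQ_abs_le {f : ℝ → ℝ} {Lf : ℝ}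
    (hf : ∀ x y, |f x - f y| ≤ Lf * |x - y|) (a c : ℝ) :
    |kruzkhovQ f a c| ≤ Lf * |a - c| := by
  rw [kruzkhovQ, abs_mul]
  calc |Real.sign (a - c)| * |f a - f c| ≤ 1 * (Lf * |a - c|) :=
        mul_le_mul (abs_realSign_le _) (hf a c) (abs_nonneg _) (by norm_num)
    _ = Lf * |a - c| := one_mul _

lemma kruzkhovQ_lip {f : ℝ → ℝ} {Lf : ℝ} (hLf : 0 ≤ Lf)
    (hf : ∀ x y, |f x - f y| ≤ Lf * |x - y|) (a b c : ℝ) :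
    |kruzkhovQ f a c - kruzkhovQ f b c| ≤ 3 * Lf * |a - b| := by
  have habn : (0:ℝ) ≤ Lf * |a - b| := mul_nonneg hLf (abs_nonneg _)
  have key : |(Real.sign (a - c) - Real.sign (b - c)) * (f b - f c)| ≤ 2 * (Lf * |a - b|) := by
    rcases eq_or_ne b c with rfl | hbc
    · simp; linarith
    rcases lt_trichotomy a c with ha | ha | ha <;> rcases lt_trichotomy b c with hb | hb | hb
    · rw [Real.sign_of_neg (by linarith : a - c < 0), Real.sign_of_neg (by linarith : b - c < 0)]
      simp; linarith
    · exact absurd hb hbc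
    · rw [Real.sign_of_neg (by linarith : a - c < 0), Real.sign_of_pos (by linarith : 0 < b - c)]
      have hfb : |f b - f c| ≤ Lf * |a - b| := by
        refine (hf b c).trans ?_
        have : |b - c| ≤ |a - b| := by
          rw [abs_of_pos (by linarith : (0:ℝ) < b - c), abs_of_neg (by linarith : a - b < 0)]
          linarith
        exact mul_le_mul_of_nonneg_left this hLf
      rw [abs_mul]
      have : |(-1 : ℝ) - 1| = 2 := by norm_num
      rw [this]
      linarith
    · subst ha
      simp only [sub_self, Real.sign_zero, zero_sub, abs_neg, abs_mul]
      have hfb : |f b - f a| ≤ Lf * |a - b| := by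
        have h := hf b a
        rwa [abs_sub_comm b a] at h
      calc |Real.sign (b - a)| * |f b - f a| ≤ 1 * (Lf * |a - b|) :=
            mul_le_mul (abs_realSign_le _) hfb (abs_nonneg _) (by norm_num)
        _ ≤ 2 * (Lf * |a - b|) := by linarith
    · exact absurd hb hbc
    · subst ha
      simp only [sub_self, Real.sign_zero, zero_sub, abs_neg, abs_mul]
      have hfb : |f b - f a| ≤ Lf * |a - b| := by
        have h := hf b a
        rwa [abs_sub_comm b a] at h
      calc |Real.sign (b - a)| * |f b - f a| ≤ 1 * (Lf * |a - b|) :=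
            mul_le_mul (abs_realSign_le _) hfb (abs_nonneg _) (by norm_num)
        _ ≤ 2 * (Lf * |a - b|) := by linarith
    · rw [Real.sign_of_pos (by linarith : 0 < a - c), Real.sign_of_neg (by linarith : b - c < 0)]
      have hfb : |f b - f c| ≤ Lf * |a - b| := by
        refine (hf b c).trans ?_
        have : |b - c| ≤ |a - b| := by
          rw [abs_of_neg (by linarith : b - c < 0), abs_of_pos (by linarith : (0:ℝ) < a - b)]
          linarith
        exact mul_le_mul_of_nonneg_left this hLf
      rw [abs_mul]
      have : |(1 : ℝ) - -1| = 2 := by norm_num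
      rw [this]
      linarith
    · exact absurd hb hbc
    · rw [Real.sign_of_pos (by linarith : 0 < a - c), Real.sign_of_pos (by linarith : 0 < b - c)]
      simp; linarith
  have hsplit : kruzkhovQ f a c - kruzkhovQ f b c =
      Real.sign (a - c) * (f a - f b) + (Real.sign (a - c) - Real.sign (b - c)) * (f b - f c) := by
    simp only [kruzkhovQ]; ring
  rw [hsplit]
  calc |Real.sign (a - c) * (f a - f b) + (Real.sign (a - c) - Real.sign (b - c)) * (f b - f c)|
      ≤ |Real.sign (a - c) * (f a - f b)| +
        |(Real.sign (a - c) - Real.sign (b - c)) * (f b - f c)| := abs_add_le _ _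
    _ ≤ 1 * (Lf * |a - b|) + 2 * (Lf * |a - b|) := by
        refine add_le_add ?_ key
        rw [abs_mul]
        exact mul_le_mul (abs_realSign_le _) (hf a b) (abs_nonneg _) (by norm_num)
    _ = 3 * Lf * |a - b| := by ring

lemma holder_aux {α : Type*} [MeasurableSpace α] {μ : Measure α} {p q : ℝ≥0∞}
    (hone : (1 : ℝ≥0∞)/1 = 1/p + 1/q) {g w : α → ℝ} (hg : MemLp g p μ) (hw : MemLp w q μ) :
    ∫ z, |g z| * |w z| ∂μ ≤ (eLpNorm g p μ).toReal * (eLpNorm w q μ).toReal := by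
  have hmem : MemLp (g • w) 1 μ := hw.smul hg (r := 1) (hpqr := ⟨by simpa [one_div] using hone.symm⟩)
  have h1 : ∫ z, |g z| * |w z| ∂μ = ∫ z, ‖(g • w) z‖ ∂μ := by
    simp [Pi.smul_apply, smul_eq_mul, Real.norm_eq_abs, abs_mul]
  rw [h1, integral_norm_eq_lintegral_enorm hmem.1, ← eLpNorm_one_eq_lintegral_enorm]
  have hle : eLpNorm (g • w) 1 μ ≤ eLpNorm g p μ * eLpNorm w q μ :=
    eLpNorm_smul_le_mul_eLpNorm hw.1 hg.1 (r := 1) (hpqr := ⟨by simpa [one_div] using hone.symm⟩)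
  have hfin : eLpNorm g p μ * eLpNorm w q μ ≠ ⊤ :=
    ENNReal.mul_ne_top hg.eLpNorm_ne_top hw.eLpNorm_ne_top
  calc (eLpNorm (g • w) 1 μ).toReal ≤ (eLpNorm g p μ * eLpNorm w q μ).toReal :=
        ENNReal.toReal_mono hfin hle
    _ = _ := ENNReal.toReal_mul


/-- the Kruzkhov entropy residual of any `v ∈ L^q(Ω)`, tested against a
test function `φ ∈ W₀^{1,∞}(Ω)` (extended by zero outside `Ω = [0,1] × [0,T]`), is
bounded by `(1 + 3 L_f) |φ|_{W^{1,p}(Ω)} ‖u - v‖_{L^q(Ω)}`, where `u` is the entropy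
solution (encoded by the Kruzkhov entropy inequalities `R(u, ψ, c) ≤ 0` for all
admissible nonnegative test functions `ψ`), `1/p + 1/q = 1` with `q ≥ 1`
(including `p = ∞, q = 1`), and the `W^{1,p}`-seminorm is `max(‖∂ₜφ‖_{L^p}, ‖∂ₓφ‖_{L^p})`. -/
theorem entropy_residual_bound
    (T : ℝ) (hT : 0 < T)
    (Ω : Set (ℝ × ℝ)) (hΩ : Ω = Set.Icc (0 : ℝ) 1 ×ˢ Set.Icc (0 : ℝ) T)
    (p q : ℝ≥0∞) (hq : 1 ≤ q) (hpq : 1 / p + 1 / q = 1)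
    (f : ℝ → ℝ) (Lf : ℝ) (hLf : 0 ≤ Lf)
    (hf : ∀ x y : ℝ, |f x - f y| ≤ Lf * |x - y|)
    (u v : ℝ × ℝ → ℝ)
    (hu_meas : Measurable u) (hv_meas : Measurable v)
    (hu_q : MemLp u q (volume.restrict Ω)) (hv_q : MemLp v q (volume.restrict Ω))
    -- `u` is the entropy solution: the Kruzkhov entropy inequality holds for every
    -- constant `c` and every nonnegative `C¹` test function vanishing outside the
    -- interior of `Ω` :
    (hu_entropy : ∀ (c : ℝ) (ψ ψt ψx : ℝ × ℝ → ℝ),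
      (∀ z : ℝ × ℝ, HasDerivAt (fun x => ψ (x, z.2)) (ψx z) z.1) →
      (∀ z : ℝ × ℝ, HasDerivAt (fun t => ψ (z.1, t)) (ψt z) z.2) →
      (∀ z : ℝ × ℝ, 0 ≤ ψ z) →
      (∀ z : ℝ × ℝ, z ∉ interior Ω → ψ z = 0) →
      entropyResidual f Ω u ψt ψx c ≤ 0)
    -- the test function `φ ∈ W₀^{1,∞}(Ω)` with partial derivatives `φt, φx` :
    (φ φt φx : ℝ × ℝ → ℝ)
    (hφx : ∀ z : ℝ × ℝ, HasDerivAt (fun x => φ (x, z.2)) (φx z) z.1)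
    (hφt : ∀ z : ℝ × ℝ, HasDerivAt (fun t => φ (z.1, t)) (φt z) z.2)
    (hφ_nonneg : ∀ z : ℝ × ℝ, 0 ≤ φ z)
    (hφ_zero : ∀ z : ℝ × ℝ, z ∉ interior Ω → φ z = 0)
    (hφt_p : MemLp φt p (volume.restrict Ω)) (hφx_p : MemLp φx p (volume.restrict Ω))
    (c : ℝ) :
    entropyResidual f Ω v φt φx c ≤
      (1 + 3 * Lf) *
        (max (eLpNorm φt p (volume.restrict Ω)) (eLpNorm φx p (volume.restrict Ω))).toReal *
        (eLpNorm (fun z => u z - v z) q (volume.restrict Ω)).toReal := by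
  haveI hfinμ : IsFiniteMeasure (volume.restrict Ω) := by
    constructor
    rw [Measure.restrict_apply_univ, hΩ]
    exact (isCompact_Icc.prod isCompact_Icc).measure_lt_top
  set μ := volume.restrict Ω with hμdef
  have hone : (1 : ℝ≥0∞)/1 = 1/p + 1/q := by rw [hpq]; norm_num
  -- continuity of f
  have hfc : Continuous f := by
    have hl : LipschitzWith (Real.toNNReal Lf) f := by
      apply LipschitzWith.of_dist_le_mul
      intro x y
      rw [Real.dist_eq, Real.dist_eq, Real.coe_toNNReal Lf hLf]
      exact hf x y
    exact hl.continuous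
  -- MemLp facts
  have habs : ∀ w : ℝ × ℝ → ℝ, MemLp w q μ → MemLp (fun z => |w z - c|) q μ := by
    intro w hw
    have h := (hw.sub (memLp_const c)).norm
    simpa [Real.norm_eq_abs] using h
  have habs_u := habs u hu_q
  have habs_v := habs v hv_q
  have hQ : ∀ w : ℝ × ℝ → ℝ, Measurable w → MemLp w q μ →
      MemLp (fun z => kruzkhovQ f (w z) c) q μ := by
    intro w hwm hw
    refine MemLp.of_le ((habs w hw).const_mul Lf) ?_ ?_
    · exact ((measurable_realSign.comp (hwm.sub measurable_const)).mul
        ((hfc.measurable.comp hwm).sub measurable_const)).aestronglyMeasurable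
    · filter_upwards with z
      rw [Real.norm_eq_abs, Real.norm_eq_abs,
        abs_of_nonneg (mul_nonneg hLf (abs_nonneg _))]
      exact kruzkhovQ_abs_le hf (w z) c
  have hQu := hQ u hu_meas hu_q
  have hQv := hQ v hv_meas hv_q
  -- integrability of products
  have hint : ∀ g h : ℝ × ℝ → ℝ, MemLp g p μ → MemLp h q μ →
      Integrable (fun z => h z * g z) μ := by
    intro g h hg hh
    have := memLp_one_iff_integrable.mp (hh.smul hg (r := 1) (hpqr := ⟨by simpa [one_div] using hone.symm⟩))
    simpa [smul_eq_mul, mul_comm, Pi.mul_def] using this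
  have IA : Integrable (fun z => |u z - c| * φt z + kruzkhovQ f (u z) c * φx z) μ :=
    (hint φt _ hφt_p habs_u).add (hint φx _ hφx_p hQu)
  have IB : Integrable (fun z => |v z - c| * φt z + kruzkhovQ f (v z) c * φx z) μ :=
    (hint φt _ hφt_p habs_v).add (hint φx _ hφx_p hQv)
  set w : ℝ × ℝ → ℝ := fun z => u z - v z with hwdef
  have hw : MemLp w q μ := hu_q.sub hv_q
  have habs_w : MemLp (fun z => |w z|) q μ := by
    simpa [Real.norm_eq_abs] using hw.norm
  have habs_φt : MemLp (fun z => |φt z|) p μ := by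
    simpa [Real.norm_eq_abs] using hφt_p.norm
  have habs_φx : MemLp (fun z => |φx z|) p μ := by
    simpa [Real.norm_eq_abs] using hφx_p.norm
  have I1 : Integrable (fun z => |φt z| * |w z|) μ := by
    have := memLp_one_iff_integrable.mp (habs_w.smul habs_φt (r := 1) (hpqr := ⟨by simpa [one_div] using hone.symm⟩))
    simpa [smul_eq_mul, Pi.mul_def] using this
  have I2 : Integrable (fun z => |φx z| * |w z|) μ := by
    have := memLp_one_iff_integrable.mp (habs_w.smul habs_φx (r := 1) (hpqr := ⟨by simpa [one_div] using hone.symm⟩))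
    simpa [smul_eq_mul, Pi.mul_def] using this
  -- entropy inequality for u
  have hRu : entropyResidual f Ω u φt φx c ≤ 0 :=
    hu_entropy c φ φt φx hφx hφt hφ_nonneg hφ_zero
  have hRu' : (0:ℝ) ≤ ∫ z, (|u z - c| * φt z + kruzkhovQ f (u z) c * φx z) ∂μ := by
    have : -∫ z, (|u z - c| * φt z + kruzkhovQ f (u z) c * φx z) ∂μ ≤ 0 := hRu
    linarith
  -- pointwise bound
  have hpt : ∀ z, (|u z - c| * φt z + kruzkhovQ f (u z) c * φx z) -
      (|v z - c| * φt z + kruzkhovQ f (v z) c * φx z) ≤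
      |φt z| * |w z| + 3 * Lf * (|φx z| * |w z|) := by
    intro z
    have h1 : |(|u z - c| - |v z - c|)| ≤ |w z| := by
      have h := abs_abs_sub_abs_le_abs_sub (u z - c) (v z - c)
      simpa [hwdef] using h
    have h2 : |kruzkhovQ f (u z) c - kruzkhovQ f (v z) c| ≤ 3 * Lf * |w z| :=
      kruzkhovQ_lip hLf hf (u z) (v z) c
    have e : (|u z - c| * φt z + kruzkhovQ f (u z) c * φx z) -
        (|v z - c| * φt z + kruzkhovQ f (v z) c * φx z) =
        (|u z - c| - |v z - c|) * φt z +
        (kruzkhovQ f (u z) c - kruzkhovQ f (v z) c) * φx z := by ring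
    rw [e]
    calc (|u z - c| - |v z - c|) * φt z +
        (kruzkhovQ f (u z) c - kruzkhovQ f (v z) c) * φx z
        ≤ |(|u z - c| - |v z - c|) * φt z +
          (kruzkhovQ f (u z) c - kruzkhovQ f (v z) c) * φx z| := le_abs_self _
      _ ≤ |(|u z - c| - |v z - c|) * φt z| +
          |(kruzkhovQ f (u z) c - kruzkhovQ f (v z) c) * φx z| := abs_add_le _ _
      _ = |(|u z - c| - |v z - c|)| * |φt z| +
          |kruzkhovQ f (u z) c - kruzkhovQ f (v z) c| * |φx z| := by rw [abs_mul, abs_mul]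
      _ ≤ |w z| * |φt z| + (3 * Lf * |w z|) * |φx z| :=
          add_le_add (mul_le_mul_of_nonneg_right h1 (abs_nonneg _))
            (mul_le_mul_of_nonneg_right h2 (abs_nonneg _))
      _ = |φt z| * |w z| + 3 * Lf * (|φx z| * |w z|) := by ring
  -- main chain
  have hH1 : ∫ z, |φt z| * |w z| ∂μ ≤ (eLpNorm φt p μ).toReal * (eLpNorm w q μ).toReal :=
    holder_aux hone hφt_p hw
  have hH2 : ∫ z, |φx z| * |w z| ∂μ ≤ (eLpNorm φx p μ).toReal * (eLpNorm w q μ).toReal :=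
    holder_aux hone hφx_p hw
  have hmaxfin : max (eLpNorm φt p μ) (eLpNorm φx p μ) ≠ ⊤ :=
    (max_lt hφt_p.eLpNorm_lt_top hφx_p.eLpNorm_lt_top).ne
  have hMt : (eLpNorm φt p μ).toReal ≤ (max (eLpNorm φt p μ) (eLpNorm φx p μ)).toReal :=
    ENNReal.toReal_mono hmaxfin (le_max_left _ _)
  have hMx : (eLpNorm φx p μ).toReal ≤ (max (eLpNorm φt p μ) (eLpNorm φx p μ)).toReal :=
    ENNReal.toReal_mono hmaxfin (le_max_right _ _)
  have hWn : (0:ℝ) ≤ (eLpNorm w q μ).toReal := ENNReal.toReal_nonneg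
  set M : ℝ := (max (eLpNorm φt p μ) (eLpNorm φx p μ)).toReal with hMdef
  set W : ℝ := (eLpNorm w q μ).toReal with hWdef
  have hMn : (0:ℝ) ≤ M := ENNReal.toReal_nonneg
  show -∫ z, (|v z - c| * φt z + kruzkhovQ f (v z) c * φx z) ∂μ ≤ (1 + 3 * Lf) * M * W
  calc -∫ z, (|v z - c| * φt z + kruzkhovQ f (v z) c * φx z) ∂μ
      ≤ ∫ z, ((|u z - c| * φt z + kruzkhovQ f (u z) c * φx z) -
          (|v z - c| * φt z + kruzkhovQ f (v z) c * φx z)) ∂μ := by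
        rw [integral_sub IA IB]; linarith
    _ ≤ ∫ z, (|φt z| * |w z| + 3 * Lf * (|φx z| * |w z|)) ∂μ :=
        integral_mono (IA.sub IB) (I1.add ((I2.const_mul (3 * Lf)))) fun z => hpt z
    _ = ∫ z, |φt z| * |w z| ∂μ + 3 * Lf * ∫ z, |φx z| * |w z| ∂μ := by
        rw [integral_add I1 (I2.const_mul (3 * Lf)), integral_const_mul]
    _ ≤ (eLpNorm φt p μ).toReal * W + 3 * Lf * ((eLpNorm φx p μ).toReal * W) := by
        refine add_le_add hH1 (mul_le_mul_of_nonneg_left hH2 (by linarith))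
    _ ≤ M * W + 3 * Lf * (M * W) := by
        refine add_le_add (mul_le_mul_of_nonneg_right hMt hWn)
          (mul_le_mul_of_nonneg_left (mul_le_mul_of_nonneg_right hMx hWn) (by linarith))
    _ = (1 + 3 * Lf) * M * W := by ring
end

section
/- Let σ = tanh, 0 < ε < min{1, b−a}, and f ∈ C¹([a,b]). Define ρ_ε(x) = (σ(β(x+ε²)) − σ(β(x−ε²)))/(2ε²) with β = −3 ln(ε)/ε, and ω(t) = σ(β(t − max{a, t−ε})) − σ(β(t − min{b, t+ε})). Then for every t ∈ [a,b]: |∫_a^b f(s) ρ_ε(t−s) ds − ω(t) f(t)| ≤ 20 ‖f‖_{C¹([a,b])} (b − a − ln ε) ε. -/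
open intervalIntegral

lemma my_tanh_formula (x : ℝ) : Real.tanh x = 1 - 2 / (Real.exp (2*x) + 1) := by
  rw [Real.tanh_eq_sinh_div_cosh, Real.sinh_eq, Real.cosh_eq]
  have h1 : (0:ℝ) < Real.exp x := Real.exp_pos x
  have h2 : Real.exp (2*x) = Real.exp x * Real.exp x := by rw [two_mul, Real.exp_add]
  have h3 : Real.exp (-x) = (Real.exp x)⁻¹ := Real.exp_neg x
  rw [h2, h3]
  have h4 : Real.exp x * Real.exp x + 1 > 0 := by positivity
  field_simp
  ring

lemma my_tanh_le_one (x : ℝ) : Real.tanh x ≤ 1 := by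
  rw [my_tanh_formula]
  have : 0 < Real.exp (2*x) + 1 := by positivity
  have : 2 / (Real.exp (2*x) + 1) ≥ 0 := by positivity
  linarith

lemma my_tanh_mono {u v : ℝ} (h : u ≤ v) : Real.tanh u ≤ Real.tanh v := by
  rw [my_tanh_formula, my_tanh_formula]
  have h1 : Real.exp (2*u) ≤ Real.exp (2*v) := Real.exp_le_exp.mpr (by linarith)
  have h2 : (0:ℝ) < Real.exp (2*u) + 1 := by positivity
  have h3 : 2 / (Real.exp (2*v) + 1) ≤ 2 / (Real.exp (2*u) + 1) := by
    apply div_le_div_of_nonneg_left (by norm_num) h2 (by linarith)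
  linarith

lemma my_one_sub_tanh (y : ℝ) (hy : 0 ≤ y) : 1 - Real.tanh y ≤ 2 * Real.exp (-(2*y)) := by
  rw [my_tanh_formula]
  have h1 : (0:ℝ) < Real.exp (2*y) := Real.exp_pos _
  have h2 : Real.exp (-(2*y)) = (Real.exp (2*y))⁻¹ := Real.exp_neg _
  rw [h2]
  rw [sub_sub_cancel]
  rw [div_le_iff₀ (by positivity)]
  have h5 : (Real.exp (2*y))⁻¹ * Real.exp (2*y) = 1 := inv_mul_cancel₀ (ne_of_gt h1)
  have h6 : (0:ℝ) ≤ (Real.exp (2*y))⁻¹ := by positivity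
  nlinarith

lemma my_hasDerivAt_tanh (x : ℝ) : HasDerivAt Real.tanh (1 / Real.cosh x ^ 2) x := by
  have h := (Real.hasDerivAt_sinh x).div (Real.hasDerivAt_cosh x) (Real.cosh_pos x).ne'
  have he : Real.tanh = fun y => Real.sinh y / Real.cosh y :=
    funext fun y => Real.tanh_eq_sinh_div_cosh y
  rw [he]
  refine h.congr_deriv ?_
  have := Real.cosh_sq_sub_sinh_sq x
  field_simp
  nlinarith [Real.cosh_pos x]

lemma my_tanh_lipschitz (u v : ℝ) : |Real.tanh u - Real.tanh v| ≤ |u - v| := by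
  have hconv : Convex ℝ (Set.univ : Set ℝ) := convex_univ
  have h := hconv.norm_image_sub_le_of_norm_hasDerivWithin_le
    (f := Real.tanh) (f' := fun y => 1 / Real.cosh y ^ 2) (C := 1)
    (fun y _ => (my_hasDerivAt_tanh y).hasDerivWithinAt)
    (fun y _ => by
      rw [Real.norm_eq_abs, abs_of_nonneg (by positivity)]
      rw [div_le_one (by positivity)]
      nlinarith [Real.one_le_cosh y])
    (Set.mem_univ v) (Set.mem_univ u)
  simpa [Real.norm_eq_abs] using h

lemma my_continuous_tanh : Continuous Real.tanh := by
  have he : Real.tanh = fun y => Real.sinh y / Real.cosh y :=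
    funext fun y => Real.tanh_eq_sinh_div_cosh y
  rw [he]
  exact Real.continuous_sinh.div Real.continuous_cosh fun y => (Real.cosh_pos y).ne'

lemma my_hasDerivAt_logcosh (x : ℝ) :
    HasDerivAt (fun y => Real.log (Real.cosh y)) (Real.tanh x) x := by
  have h := (Real.hasDerivAt_cosh x).log (Real.cosh_pos x).ne'
  simpa [Real.tanh_eq_sinh_div_cosh] using h

lemma my_avg (u h : ℝ) (hh : 0 ≤ h) :
    |Real.log (Real.cosh (u+h)) - Real.log (Real.cosh (u-h)) - 2*h*Real.tanh u| ≤ 2*h^2 := by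
  have hint : IntervalIntegrable Real.tanh MeasureTheory.volume (u-h) (u+h) :=
    my_continuous_tanh.intervalIntegrable _ _
  have hftc : ∫ s in (u-h)..(u+h), Real.tanh s
      = Real.log (Real.cosh (u+h)) - Real.log (Real.cosh (u-h)) :=
    intervalIntegral.integral_eq_sub_of_hasDerivAt
      (fun s _ => my_hasDerivAt_logcosh s) hint
  have hconst : ∫ _ in (u-h)..(u+h), Real.tanh u = 2*h*Real.tanh u := by
    rw [intervalIntegral.integral_const, smul_eq_mul]
    ring
  have hdiff : Real.log (Real.cosh (u+h)) - Real.log (Real.cosh (u-h)) - 2*h*Real.tanh u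
      = ∫ s in (u-h)..(u+h), (Real.tanh s - Real.tanh u) := by
    rw [intervalIntegral.integral_sub hint (intervalIntegrable_const)]
    rw [hftc, hconst]
  rw [hdiff]
  have hb := intervalIntegral.norm_integral_le_of_norm_le_const
    (f := fun s => Real.tanh s - Real.tanh u) (C := h) (a := u-h) (b := u+h) ?_
  · rw [Real.norm_eq_abs] at hb
    calc |∫ s in (u-h)..(u+h), (Real.tanh s - Real.tanh u)| ≤ h * |u+h - (u-h)| := hb
      _ ≤ 2*h^2 := by rw [show u+h-(u-h) = 2*h by ring, abs_of_nonneg (by positivity)]; ring_nf; nlinarith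
  · intro s hs
    rw [Set.uIoc_of_le (by linarith)] at hs
    rw [Real.norm_eq_abs]
    calc |Real.tanh s - Real.tanh u| ≤ |s - u| := my_tanh_lipschitz s u
      _ ≤ h := by rw [abs_le]; constructor <;> [linarith [hs.1]; linarith [hs.2]]
set_option maxHeartbeats 2000000 in
/-- tanh-mollifier approximation. For `σ = tanh`, `0 < ε < min {1, b-a}`,
`f ∈ C¹([a,b])` with `‖f‖_{C¹([a,b])} ≤ K`, `ρ_ε(x) = (σ(β(x+ε²)) - σ(β(x-ε²)))/(2ε²)`,
`β = -3 ln ε / ε ( = 3 ln(1/ε)/ε)`, and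
`ω(t) = σ(β(t - max{a, t-ε})) - σ(β(t - min{b, t+ε}))`, we have for every `t ∈ [a,b]`:
`|∫_a^b f(s) ρ_ε(t-s) ds - ω(t) f(t)| ≤ 20 ‖f‖_{C¹} (b - a - ln ε) ε`. -/
theorem tanh_mollifier_approx (a b ε : ℝ) (hab : a < b) (h0 : 0 < ε)
    (hε : ε < min 1 (b - a)) (f f' : ℝ → ℝ)
    (hf : ∀ x ∈ Set.Icc a b, HasDerivAt f (f' x) x)
    (hf' : ContinuousOn f' (Set.Icc a b))
    (K : ℝ) (hK : ∀ x ∈ Set.Icc a b, |f x| ≤ K ∧ |f' x| ≤ K)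
    (t : ℝ) (ht : t ∈ Set.Icc a b) :
    let β : ℝ := -3 * Real.log ε / ε
    let ρ : ℝ → ℝ := fun x =>
      (Real.tanh (β * (x + ε ^ 2)) - Real.tanh (β * (x - ε ^ 2))) / (2 * ε ^ 2)
    let ω : ℝ → ℝ := fun s =>
      Real.tanh (β * (s - max a (s - ε))) - Real.tanh (β * (s - min b (s + ε)))
    |(∫ s in a..b, f s * ρ (t - s)) - ω t * f t| ≤
      20 * K * (b - a - Real.log ε) * ε := by
  intro β ρ ω
  have hε1 : ε < 1 := lt_of_lt_of_le hε (min_le_left _ _)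
  have hεba : ε < b - a := lt_of_lt_of_le hε (min_le_right _ _)
  have hlog : Real.log ε < 0 := Real.log_neg h0 hε1
  have hβ : 0 < β := by
    show (0:ℝ) < -3 * Real.log ε / ε
    apply div_pos (by linarith) h0
  have hK0 : 0 ≤ K := le_trans (abs_nonneg _) (hK t ht).1
  -- unfold ω in the goal
  show |(∫ s in a..b, f s * ρ (t - s)) -
      (Real.tanh (β * (t - max a (t - ε))) - Real.tanh (β * (t - min b (t + ε)))) * f t| ≤
      20 * K * (b - a - Real.log ε) * ε
  set c := max a (t - ε) with hc
  set d := min b (t + ε) with hd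
  have hac : a ≤ c := le_max_left _ _
  have hct : c ≤ t := max_le ht.1 (by linarith)
  have htd : t ≤ d := le_min ht.2 (by linarith)
  have hdb : d ≤ b := min_le_left _ _
  have hcd : c ≤ d := le_trans hct htd
  have htc : t - c ≤ ε := by have := le_max_right a (t - ε); rw [← hc] at this; linarith
  have hdt : d - t ≤ ε := by have := min_le_right b (t + ε); rw [← hd] at this; linarith
  -- rho properties
  have hρ_nonneg : ∀ x : ℝ, 0 ≤ ρ x := fun x => by
    show 0 ≤ (Real.tanh (β * (x + ε ^ 2)) - Real.tanh (β * (x - ε ^ 2))) / (2 * ε ^ 2)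
    apply div_nonneg _ (by positivity)
    have := my_tanh_mono (show β * (x - ε ^ 2) ≤ β * (x + ε ^ 2) by nlinarith)
    linarith
  have hρ_le : ∀ x : ℝ, ρ x ≤ β := fun x => by
    show (Real.tanh (β * (x + ε ^ 2)) - Real.tanh (β * (x - ε ^ 2))) / (2 * ε ^ 2) ≤ β
    rw [div_le_iff₀ (by positivity)]
    have h1 := my_tanh_lipschitz (β * (x + ε ^ 2)) (β * (x - ε ^ 2))
    have h2 : |β * (x + ε ^ 2) - β * (x - ε ^ 2)| = 2 * β * ε ^ 2 := by
      rw [show β * (x + ε ^ 2) - β * (x - ε ^ 2) = 2 * β * ε ^ 2 by ring]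
      exact abs_of_nonneg (by positivity)
    have h3 := le_abs_self (Real.tanh (β * (x + ε ^ 2)) - Real.tanh (β * (x - ε ^ 2)))
    nlinarith
  have hρ_symm : ∀ x : ℝ, ρ (-x) = ρ x := fun x => by
    show (Real.tanh (β * (-x + ε ^ 2)) - Real.tanh (β * (-x - ε ^ 2))) / (2 * ε ^ 2)
      = (Real.tanh (β * (x + ε ^ 2)) - Real.tanh (β * (x - ε ^ 2))) / (2 * ε ^ 2)
    rw [show β * (-x + ε ^ 2) = -(β * (x - ε ^ 2)) by ring,
        show β * (-x - ε ^ 2) = -(β * (x + ε ^ 2)) by ring,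
        Real.tanh_neg, Real.tanh_neg]
    ring
  -- exponential tail estimate
  have hlog2 : 0 < Real.log 2 := Real.log_pos one_lt_two
  have hexp8 : Real.exp (-(2 * β * (ε - ε ^ 2))) ≤ 8 * ε ^ 3 := by
    have hid : -(2 * β * (ε - ε ^ 2)) = (3 - 6 * ε) * Real.log ε + 3 * Real.log ε := by
      show -(2 * (-3 * Real.log ε / ε) * (ε - ε ^ 2)) = _
      field_simp
      ring
    have h8 : (8:ℝ) * ε ^ 3 = Real.exp (3 * Real.log 2 + 3 * Real.log ε) := by
      rw [Real.exp_add,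
        show (3:ℝ) * Real.log 2 = Real.log 2 + Real.log 2 + Real.log 2 by ring,
        show (3:ℝ) * Real.log ε = Real.log ε + Real.log ε + Real.log ε by ring,
        Real.exp_add, Real.exp_add, Real.exp_add, Real.exp_add,
        Real.exp_log two_pos, Real.exp_log h0]
      ring
    rw [hid, h8]
    apply Real.exp_le_exp.mpr
    have hkey : (3 - 6 * ε) * Real.log ε ≤ 3 * Real.log 2 := by
      rcases le_or_gt ε (1/2) with h | h
      · nlinarith
      · have hge : -Real.log 2 ≤ Real.log ε := by
          have := Real.log_le_log (by norm_num : (0:ℝ) < 1/2) h.le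
          rwa [show (1:ℝ)/2 = 2⁻¹ by norm_num, Real.log_inv] at this
        nlinarith
    linarith
  have hρ_tail : ∀ x : ℝ, ε ≤ x → ρ x ≤ 8 * ε := fun x hx => by
    show (Real.tanh (β * (x + ε ^ 2)) - Real.tanh (β * (x - ε ^ 2))) / (2 * ε ^ 2) ≤ 8 * ε
    have h1 : Real.tanh (β * (x + ε ^ 2)) ≤ 1 := my_tanh_le_one _
    have harg : 0 ≤ β * (x - ε ^ 2) := by
      have hx2 : 0 ≤ x - ε ^ 2 := by nlinarith
      exact mul_nonneg hβ.le hx2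
    have h2 := my_one_sub_tanh _ harg
    have h3 : Real.exp (-(2 * (β * (x - ε ^ 2)))) ≤ Real.exp (-(2 * β * (ε - ε ^ 2))) := by
      apply Real.exp_le_exp.mpr
      nlinarith
    rw [div_le_iff₀ (by positivity)]
    nlinarith
  -- continuity
  have hρc : Continuous fun s : ℝ => ρ (t - s) := by
    show Continuous fun s : ℝ =>
      (Real.tanh (β * ((t - s) + ε ^ 2)) - Real.tanh (β * ((t - s) - ε ^ 2))) / (2 * ε ^ 2)
    apply Continuous.div_const
    have l1 : Continuous fun s : ℝ => β * ((t - s) + ε ^ 2) :=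
      continuous_const.mul ((continuous_const.sub continuous_id).add continuous_const)
    have l2 : Continuous fun s : ℝ => β * ((t - s) - ε ^ 2) :=
      continuous_const.mul ((continuous_const.sub continuous_id).sub continuous_const)
    exact (my_continuous_tanh.comp l1).sub (my_continuous_tanh.comp l2)
  have hfc : ContinuousOn f (Set.Icc a b) := fun x hx => (hf x hx).continuousAt.continuousWithinAt
  have hfρc : ContinuousOn (fun s => f s * ρ (t - s)) (Set.Icc a b) := hfc.mul hρc.continuousOn
  have hint : ∀ p q : ℝ, a ≤ p → p ≤ q → q ≤ b →
      IntervalIntegrable (fun s => f s * ρ (t - s)) MeasureTheory.volume p q :=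
    fun p q h1 h2 h3 =>
      (hfρc.mono (Set.Icc_subset_Icc h1 h3)).intervalIntegrable_of_Icc h2
  -- split the integral
  have e1 := intervalIntegral.integral_add_adjacent_intervals
    (hint a c (le_refl a) hac (le_trans hct ht.2)) (hint c d hac hcd hdb)
  have e2 := intervalIntegral.integral_add_adjacent_intervals
    (hint a d (le_refl a) (le_trans hac hcd) hdb) (hint d b (le_trans hac hcd) hdb (le_refl b))
  -- tails
  have hI1 : |∫ s in a..c, f s * ρ (t - s)| ≤ 8 * ε * K * (b - a) := by
    have hb := intervalIntegral.norm_integral_le_of_norm_le_const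
      (f := fun s => f s * ρ (t - s)) (C := K * (8 * ε)) (a := a) (b := c) ?_
    · rw [Real.norm_eq_abs] at hb
      have : |c - a| ≤ b - a := by
        rw [abs_of_nonneg (by linarith)]
        have : c ≤ b := le_trans hct ht.2
        linarith
      have h2 : K * (8 * ε) * |c - a| ≤ K * (8 * ε) * (b - a) :=
        mul_le_mul_of_nonneg_left this (by positivity)
      nlinarith
    · intro s hs
      rw [Set.uIoc_of_le hac] at hs
      have hsb : s ≤ b := le_trans hs.2 (le_trans hct ht.2)
      have hfs : |f s| ≤ K := (hK s ⟨hs.1.le, hsb⟩).1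
      have hstε : s ≤ t - ε := by
        rcases le_max_iff.mp (show s ≤ max a (t - ε) from hs.2) with h | h
        · linarith [hs.1]
        · exact h
      have hρs := hρ_tail (t - s) (by linarith)
      rw [Real.norm_eq_abs, abs_mul]
      apply mul_le_mul hfs _ (abs_nonneg _) hK0
      rw [abs_of_nonneg (hρ_nonneg _)]
      exact hρs
  have hI3 : |∫ s in d..b, f s * ρ (t - s)| ≤ 8 * ε * K * (b - a) := by
    have hb := intervalIntegral.norm_integral_le_of_norm_le_const
      (f := fun s => f s * ρ (t - s)) (C := K * (8 * ε)) (a := d) (b := b) ?_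
    · rw [Real.norm_eq_abs] at hb
      have : |b - d| ≤ b - a := by
        rw [abs_of_nonneg (by linarith)]
        have : a ≤ d := le_trans hac hcd
        linarith
      have h2 : K * (8 * ε) * |b - d| ≤ K * (8 * ε) * (b - a) :=
        mul_le_mul_of_nonneg_left this (by positivity)
      nlinarith
    · intro s hs
      rw [Set.uIoc_of_le hdb] at hs
      have hsa : a ≤ s := le_trans (le_trans hac hcd) hs.1.le
      have hfs : |f s| ≤ K := (hK s ⟨hsa, hs.2⟩).1
      have hstε : t + ε < s := by
        rcases min_lt_iff.mp (show min b (t + ε) < s from hs.1) with h | h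
        · linarith [hs.2]
        · exact h
      have hρs : ρ (t - s) ≤ 8 * ε := by
        rw [show t - s = -(s - t) by ring, hρ_symm]
        exact hρ_tail _ (by linarith)
      rw [Real.norm_eq_abs, abs_mul]
      apply mul_le_mul hfs _ (abs_nonneg _) hK0
      rw [abs_of_nonneg (hρ_nonneg _)]
      exact hρs
  -- middle section
  have hρint : IntervalIntegrable (fun s => ρ (t - s)) MeasureTheory.volume c d :=
    hρc.intervalIntegrable _ _
  have hG : ∀ s : ℝ, HasDerivAt (fun s =>
      (Real.log (Real.cosh (β * ((t - s) - ε ^ 2))) -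
        Real.log (Real.cosh (β * ((t - s) + ε ^ 2)))) / (2 * ε ^ 2 * β)) (ρ (t - s)) s := by
    intro s
    have hin1 : HasDerivAt (fun s : ℝ => β * ((t - s) - ε ^ 2)) (-β) s := by
      have h := (((hasDerivAt_id s).const_sub t).sub_const (ε ^ 2)).const_mul β
      simpa using h
    have hin2 : HasDerivAt (fun s : ℝ => β * ((t - s) + ε ^ 2)) (-β) s := by
      have h := (((hasDerivAt_id s).const_sub t).add_const (ε ^ 2)).const_mul β
      simpa using h
    have h1 := (my_hasDerivAt_logcosh (β * ((t - s) - ε ^ 2))).comp s hin1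
    have h2 := (my_hasDerivAt_logcosh (β * ((t - s) + ε ^ 2))).comp s hin2
    have h3 := (h1.sub h2).div_const (2 * ε ^ 2 * β)
    have hval : (Real.tanh (β * ((t - s) - ε ^ 2)) * -β -
        Real.tanh (β * ((t - s) + ε ^ 2)) * -β) / (2 * ε ^ 2 * β) = ρ (t - s) := by
      show _ = (Real.tanh (β * ((t - s) + ε ^ 2)) -
        Real.tanh (β * ((t - s) - ε ^ 2))) / (2 * ε ^ 2)
      rw [div_eq_div_iff (by positivity) (by positivity)]
      ring
    rw [hval] at h3
    exact h3
  have hJG := intervalIntegral.integral_eq_sub_of_hasDerivAt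
    (f := fun s => (Real.log (Real.cosh (β * ((t - s) - ε ^ 2))) -
      Real.log (Real.cosh (β * ((t - s) + ε ^ 2)))) / (2 * ε ^ 2 * β))
    (f' := fun s => ρ (t - s)) (a := c) (b := d) (fun s _ => hG s) hρint
  have hend : ∀ u : ℝ, |(Real.log (Real.cosh (β * (u - ε ^ 2))) -
      Real.log (Real.cosh (β * (u + ε ^ 2)))) / (2 * ε ^ 2 * β) + Real.tanh (β * u)|
      ≤ β * ε ^ 2 := by
    intro u
    have hh : (0:ℝ) ≤ β * ε ^ 2 := by positivity
    have havg := my_avg (β * u) (β * ε ^ 2) hh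
    have e : (Real.log (Real.cosh (β * (u - ε ^ 2))) -
        Real.log (Real.cosh (β * (u + ε ^ 2)))) / (2 * ε ^ 2 * β) + Real.tanh (β * u)
        = -(Real.log (Real.cosh (β * u + β * ε ^ 2)) - Real.log (Real.cosh (β * u - β * ε ^ 2))
            - 2 * (β * ε ^ 2) * Real.tanh (β * u)) / (2 * ε ^ 2 * β) := by
      rw [show β * (u - ε ^ 2) = β * u - β * ε ^ 2 by ring,
          show β * (u + ε ^ 2) = β * u + β * ε ^ 2 by ring]
      field_simp
      ring
    rw [e, abs_div, abs_of_pos (show (0:ℝ) < 2 * ε ^ 2 * β by positivity), abs_neg]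
    rw [div_le_iff₀ (by positivity)]
    have heq : 2 * (β * ε ^ 2) ^ 2 = β * ε ^ 2 * (2 * ε ^ 2 * β) := by ring
    linarith [havg]
  have hωJ : |(∫ s in c..d, ρ (t - s)) -
      (Real.tanh (β * (t - c)) - Real.tanh (β * (t - d)))| ≤ 2 * (β * ε ^ 2) := by
    rw [hJG]
    have h1 := hend (t - c)
    have h2 := hend (t - d)
    rw [show (Real.log (Real.cosh (β * ((t - d) - ε ^ 2))) -
          Real.log (Real.cosh (β * ((t - d) + ε ^ 2)))) / (2 * ε ^ 2 * β) -
        (Real.log (Real.cosh (β * ((t - c) - ε ^ 2))) -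
          Real.log (Real.cosh (β * ((t - c) + ε ^ 2)))) / (2 * ε ^ 2 * β) -
        (Real.tanh (β * (t - c)) - Real.tanh (β * (t - d)))
        = ((Real.log (Real.cosh (β * ((t - d) - ε ^ 2))) -
          Real.log (Real.cosh (β * ((t - d) + ε ^ 2)))) / (2 * ε ^ 2 * β) + Real.tanh (β * (t - d)))
        - ((Real.log (Real.cosh (β * ((t - c) - ε ^ 2))) -
          Real.log (Real.cosh (β * ((t - c) + ε ^ 2)))) / (2 * ε ^ 2 * β) + Real.tanh (β * (t - c)))
        by ring]
    calc |_ - _| ≤ |_| + |_| := abs_sub _ _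
      _ ≤ β * ε ^ 2 + β * ε ^ 2 := add_le_add h2 h1
      _ = 2 * (β * ε ^ 2) := by ring
  have hint1 : IntervalIntegrable (fun s => (f s - f t) * ρ (t - s))
      MeasureTheory.volume c d := by
    apply ContinuousOn.intervalIntegrable_of_Icc hcd
    exact (((hfc.mono (Set.Icc_subset_Icc hac hdb)).sub continuousOn_const).mul
      hρc.continuousOn)
  have hint2 : IntervalIntegrable (fun s => f t * ρ (t - s)) MeasureTheory.volume c d :=
    (continuous_const.mul hρc).intervalIntegrable _ _
  have hmid : (∫ s in c..d, f s * ρ (t - s))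
      = (∫ s in c..d, (f s - f t) * ρ (t - s)) + f t * ∫ s in c..d, ρ (t - s) := by
    rw [← intervalIntegral.integral_const_mul, ← intervalIntegral.integral_add hint1 hint2]
    apply intervalIntegral.integral_congr
    intro s _
    ring
  have hA : |∫ s in c..d, (f s - f t) * ρ (t - s)| ≤ K * ε * β * (2 * ε) := by
    have hflip : ∀ x ∈ Set.Icc a b, ∀ y ∈ Set.Icc a b, |f y - f x| ≤ K * |y - x| := by
      intro x hx y hy
      have h := (convex_Icc a b).norm_image_sub_le_of_norm_hasDerivWithin_le
        (fun z hz => (hf z hz).hasDerivWithinAt)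
        (fun z hz => by rw [Real.norm_eq_abs]; exact (hK z hz).2) hx hy
      simpa [Real.norm_eq_abs] using h
    have hbnd := intervalIntegral.norm_integral_le_of_norm_le_const
      (f := fun s => (f s - f t) * ρ (t - s)) (C := K * ε * β) (a := c) (b := d) ?_
    · rw [Real.norm_eq_abs] at hbnd
      have hdc : |d - c| ≤ 2 * ε := by
        rw [abs_of_nonneg (by linarith)]
        linarith
      have h2 : K * ε * β * |d - c| ≤ K * ε * β * (2 * ε) :=
        mul_le_mul_of_nonneg_left hdc (by positivity)
      linarith
    · intro s hs
      rw [Set.uIoc_of_le hcd] at hs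
      have hsab : s ∈ Set.Icc a b := ⟨le_trans hac hs.1.le, le_trans hs.2 hdb⟩
      rw [Real.norm_eq_abs, abs_mul]
      have h1 : |f s - f t| ≤ K * ε := by
        have hl := hflip t ht s hsab
        have hst : |s - t| ≤ ε := by
          rw [abs_le]
          constructor
          · linarith [hs.1]
          · linarith [hs.2]
        calc |f s - f t| ≤ K * |s - t| := hl
          _ ≤ K * ε := mul_le_mul_of_nonneg_left hst hK0
      have h2 : |ρ (t - s)| ≤ β := by
        rw [abs_of_nonneg (hρ_nonneg _)]
        exact hρ_le _
      calc |f s - f t| * |ρ (t - s)| ≤ (K * ε) * β :=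
            mul_le_mul h1 h2 (abs_nonneg _) (by positivity)
        _ = K * ε * β := by ring
  -- assembly
  have hft : |f t| ≤ K := (hK t ht).1
  have hβε2 : β * ε ^ 2 = -3 * Real.log ε * ε := by
    show -3 * Real.log ε / ε * ε ^ 2 = _
    field_simp
  have hx4 : |f t * ((∫ s in c..d, ρ (t - s)) -
      (Real.tanh (β * (t - c)) - Real.tanh (β * (t - d))))| ≤ K * (2 * (β * ε ^ 2)) := by
    rw [abs_mul]
    exact mul_le_mul hft hωJ (abs_nonneg _) hK0
  have hsplit : (∫ s in a..b, f s * ρ (t - s)) -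
      (Real.tanh (β * (t - c)) - Real.tanh (β * (t - d))) * f t
      = (∫ s in a..c, f s * ρ (t - s)) + (∫ s in c..d, (f s - f t) * ρ (t - s))
        + (∫ s in d..b, f s * ρ (t - s))
        + f t * ((∫ s in c..d, ρ (t - s)) -
          (Real.tanh (β * (t - c)) - Real.tanh (β * (t - d)))) := by
    rw [← e2, ← e1, hmid]
    ring
  rw [hsplit]
  have t1 : 0 ≤ K * ((b - a) * ε) := mul_nonneg hK0 (mul_nonneg (by linarith) h0.le)
  have t2 : 0 ≤ K * (ε * -Real.log ε) := mul_nonneg hK0 (mul_nonneg h0.le (by linarith))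
  have habs1 := abs_add_le ((∫ s in a..c, f s * ρ (t - s)) + (∫ s in c..d, (f s - f t) * ρ (t - s))
      + (∫ s in d..b, f s * ρ (t - s)))
    (f t * ((∫ s in c..d, ρ (t - s)) - (Real.tanh (β * (t - c)) - Real.tanh (β * (t - d)))))
  have habs2 := abs_add_le ((∫ s in a..c, f s * ρ (t - s)) + (∫ s in c..d, (f s - f t) * ρ (t - s)))
    (∫ s in d..b, f s * ρ (t - s))
  have habs3 := abs_add_le (∫ s in a..c, f s * ρ (t - s)) (∫ s in c..d, (f s - f t) * ρ (t - s))
  nlinarith [hI1, hI3, hA, hx4, t1, t2, hβε2, hK0]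
end

section
/- Let σ = tanh, 0 < ε < 1, β = 9 ln(1/ε)/ε³, and ρ_ε(x) = (σ(β(x+ε⁶)) − σ(β(x−ε⁶)))/(2ε⁶). Then ρ_ε(ε) ≤ ρ_ε(ε³) ≤ β σ'(β ε³) + 20 ε³ ≤ 21 ε³. -/
private lemma tanh_sub_eq (u v : ℝ) :
    Real.tanh u - Real.tanh v = Real.sinh (u - v) / (Real.cosh u * Real.cosh v) := by
  rw [Real.sinh_sub, Real.tanh_eq_sinh_div_cosh, Real.tanh_eq_sinh_div_cosh]
  field_simp [(Real.cosh_pos u).ne', (Real.cosh_pos v).ne']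

private lemma one_sub_tanh_sq (y : ℝ) :
    1 - Real.tanh y ^ 2 = 1 / Real.cosh y ^ 2 := by
  rw [Real.tanh_eq_sinh_div_cosh, div_pow]
  have h := (Real.cosh_pos y).ne'
  field_simp
  have := Real.cosh_sq y; linarith

private lemma self_le_exp_div (x : ℝ) : x ≤ Real.exp x / Real.exp 1 := by
  have h := Real.add_one_le_exp (x - 1)
  rw [Real.exp_sub] at h
  linarith

private lemma cosh_ge (x : ℝ) : Real.exp x / 2 ≤ Real.cosh x := by
  rw [Real.cosh_eq]
  have := Real.exp_pos (-x)
  linarith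

private lemma exp_nine_quarter_le : Real.exp (9 / 4 : ℝ) ≤ 20 := by
  have h9 : Real.exp (9 / 4 : ℝ) ^ 4 ≤ 160000 := by
    have h : Real.exp (9 / 4 : ℝ) ^ 4 = Real.exp 1 ^ 9 := by
      rw [← Real.exp_nat_mul, ← Real.exp_nat_mul]
      norm_num
    rw [h]
    calc Real.exp 1 ^ 9 ≤ 2.7182818286 ^ 9 :=
          pow_le_pow_left₀ (Real.exp_pos 1).le Real.exp_one_lt_d9.le 9
      _ ≤ 160000 := by norm_num
  have h20 : Real.exp (9 / 4 : ℝ) ^ 4 ≤ 20 ^ 4 := by norm_num; linarith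
  exact le_of_pow_le_pow_left₀ (by norm_num) (by norm_num) h20

private lemma cubic_aux (s : ℝ) (hs : 0 ≤ s) (hs1 : s ≤ 1) :
    20 / 9 * s ≤ 1 + 2 * s ^ 3 := by
  nlinarith [mul_nonneg (mul_nonneg hs hs) hs, mul_nonneg (sq_nonneg (s - 3/5)) hs,
    sq_nonneg (s - 3/5)]

set_option maxHeartbeats 1000000 in
/-- decay of the tanh mollifier
`ρ_ε(x) = (σ(β(x+ε⁶)) - σ(β(x-ε⁶)))/(2ε⁶)` with `β = 9 ln(1/ε)/ε³`, `σ = tanh`,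
`σ'(y) = 1 - tanh(y)²`, away from its center:
`ρ_ε(ε) ≤ ρ_ε(ε³) ≤ β σ'(β ε³) + 20 ε³ ≤ 21 ε³`. -/
theorem mollifier_decay (ε : ℝ) (h0 : 0 < ε) (h1 : ε < 1) :
    let β : ℝ := 9 * Real.log (1 / ε) / ε ^ 3
    let ρ : ℝ → ℝ := fun x =>
      (Real.tanh (β * (x + ε ^ 6)) - Real.tanh (β * (x - ε ^ 6))) / (2 * ε ^ 6)
    ρ ε ≤ ρ (ε ^ 3) ∧
    ρ (ε ^ 3) ≤ β * (1 - Real.tanh (β * ε ^ 3) ^ 2) + 20 * ε ^ 3 ∧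
    β * (1 - Real.tanh (β * ε ^ 3) ^ 2) + 20 * ε ^ 3 ≤ 21 * ε ^ 3 := by
  intro β ρ
  have hε3 : (0:ℝ) < ε ^ 3 := by positivity
  have hε6 : (0:ℝ) < ε ^ 6 := by positivity
  set L : ℝ := Real.log (1 / ε) with hLdef
  have hLpos : 0 < L := Real.log_pos (by rw [lt_div_iff₀ h0]; linarith)
  have hexpL : Real.exp L = 1 / ε := Real.exp_log (by positivity)
  have hβ : β = 9 * L / ε ^ 3 := rfl
  have hβpos : 0 < β := by rw [hβ]; positivity
  have hexpk : ∀ n : ℕ, Real.exp ((n : ℝ) * L) = 1 / ε ^ n := by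
    intro n
    rw [Real.exp_nat_mul, hexpL, one_div, one_div, inv_pow]
  -- crucial small-quantity bounds
  have h3L : 3 * L * ε ^ 3 ≤ 1 / Real.exp 1 := by
    have h := self_le_exp_div (3 * L)
    have hx : Real.exp (3 * L) = 1 / ε ^ 3 := by
      have := hexpk 3; push_cast at this; exact this
    rw [hx] at h
    calc 3 * L * ε ^ 3 ≤ (1 / ε ^ 3 / Real.exp 1) * ε ^ 3 := by
          apply mul_le_mul_of_nonneg_right h hε3.le
      _ = 1 / Real.exp 1 := by field_simp
  have h6L : 6 * L * ε ^ 6 ≤ 1 / Real.exp 1 := by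
    have h := self_le_exp_div (6 * L)
    have hx : Real.exp (6 * L) = 1 / ε ^ 6 := by
      have := hexpk 6; push_cast at this; exact this
    rw [hx] at h
    calc 6 * L * ε ^ 6 ≤ (1 / ε ^ 6 / Real.exp 1) * ε ^ 6 := by
          apply mul_le_mul_of_nonneg_right h hε6.le
      _ = 1 / Real.exp 1 := by field_simp
  have hinv_e : 1 / Real.exp 1 ≤ 10 / 27 := by
    rw [div_le_div_iff₀ (Real.exp_pos 1) (by norm_num)]
    nlinarith [Real.exp_one_gt_d9]
  -- rewrite ρ via sinh/cosh
  have hρ : ∀ x : ℝ, ρ x = Real.sinh (2 * β * ε ^ 6) /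
      (Real.cosh (β * (x + ε ^ 6)) * Real.cosh (β * (x - ε ^ 6)) * (2 * ε ^ 6)) := by
    intro x
    show (Real.tanh (β * (x + ε ^ 6)) - Real.tanh (β * (x - ε ^ 6))) / (2 * ε ^ 6) = _
    rw [tanh_sub_eq, show β * (x + ε ^ 6) - β * (x - ε ^ 6) = 2 * β * ε ^ 6 by ring,
      div_div]
  have hε63 : ε ^ 6 ≤ ε ^ 3 := pow_le_pow_of_le_one h0.le h1.le (by norm_num)
  have hε31 : ε ^ 3 ≤ ε := by
    have := pow_le_pow_of_le_one h0.le h1.le (show 1 ≤ 3 by norm_num)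
    simpa using this
  have hε61 : ε ^ 6 ≤ ε := le_trans hε63 hε31
  -- Part 1
  have part1 : ρ ε ≤ ρ (ε ^ 3) := by
    rw [hρ ε, hρ (ε ^ 3)]
    have hnum : 0 ≤ Real.sinh (2 * β * ε ^ 6) := by
      rw [Real.sinh_nonneg_iff]; positivity
    have hc1 : Real.cosh (β * (ε ^ 3 + ε ^ 6)) ≤ Real.cosh (β * (ε + ε ^ 6)) := by
      rw [Real.cosh_le_cosh, abs_of_nonneg (by positivity), abs_of_nonneg (by positivity)]
      nlinarith
    have hc2 : Real.cosh (β * (ε ^ 3 - ε ^ 6)) ≤ Real.cosh (β * (ε - ε ^ 6)) := by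
      rw [Real.cosh_le_cosh, abs_of_nonneg (by nlinarith), abs_of_nonneg (by nlinarith)]
      nlinarith
    apply div_le_div_of_nonneg_left hnum (by positivity)
    have c1 := (Real.cosh_pos (β * (ε ^ 3 + ε ^ 6)))
    have c2 := (Real.cosh_pos (β * (ε ^ 3 - ε ^ 6)))
    have c3 := (Real.cosh_pos (β * (ε + ε ^ 6)))
    have c4 := (Real.cosh_pos (β * (ε - ε ^ 6)))
    nlinarith [mul_le_mul hc1 hc2 c2.le c3.le]
  -- key bound : ρ(ε³) ≤ 20 ε³
  have h2βε6 : 2 * β * ε ^ 6 = 18 * L * ε ^ 3 := by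
    rw [hβ]; field_simp; ring
  have hsmall : 18 * L * ε ^ 3 ≤ 9 / 4 := by nlinarith
  have hsinh10 : Real.sinh (2 * β * ε ^ 6) ≤ 10 := by
    rw [h2βε6, Real.sinh_eq]
    have he1 : Real.exp (18 * L * ε ^ 3) ≤ Real.exp (9 / 4 : ℝ) := Real.exp_le_exp.2 hsmall
    have he2 := Real.exp_pos (-(18 * L * ε ^ 3))
    have := exp_nine_quarter_le
    linarith
  have hAB : β * (ε ^ 3 + ε ^ 6) + β * (ε ^ 3 - ε ^ 6) = 18 * L := by
    rw [hβ]; field_simp; ring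
  have hexpAB : Real.exp (β * (ε ^ 3 + ε ^ 6)) * Real.exp (β * (ε ^ 3 - ε ^ 6))
      = 1 / ε ^ 18 := by
    rw [← Real.exp_add, hAB]
    have := hexpk 18; push_cast at this; exact this
  have hρ20 : ρ (ε ^ 3) ≤ 20 * ε ^ 3 := by
    rw [hρ (ε ^ 3)]
    have hDpos : 0 < Real.cosh (β * (ε ^ 3 + ε ^ 6)) * Real.cosh (β * (ε ^ 3 - ε ^ 6))
        * (2 * ε ^ 6) := by
      have c1 := Real.cosh_pos (β * (ε ^ 3 + ε ^ 6))
      have c2 := Real.cosh_pos (β * (ε ^ 3 - ε ^ 6))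
      positivity
    rw [div_le_iff₀ hDpos]
    have hD10 : (10:ℝ) ≤ 20 * ε ^ 3 * (Real.cosh (β * (ε ^ 3 + ε ^ 6)) *
        Real.cosh (β * (ε ^ 3 - ε ^ 6)) * (2 * ε ^ 6)) := by
      have hA := cosh_ge (β * (ε ^ 3 + ε ^ 6))
      have hB := cosh_ge (β * (ε ^ 3 - ε ^ 6))
      have hcc : Real.exp (β * (ε ^ 3 + ε ^ 6)) / 2 * (Real.exp (β * (ε ^ 3 - ε ^ 6)) / 2)
          ≤ Real.cosh (β * (ε ^ 3 + ε ^ 6)) * Real.cosh (β * (ε ^ 3 - ε ^ 6)) := by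
        apply mul_le_mul hA hB (by positivity) (Real.cosh_pos _).le
      have hcc' : 1 / ε ^ 18 / 4 ≤ Real.cosh (β * (ε ^ 3 + ε ^ 6)) *
          Real.cosh (β * (ε ^ 3 - ε ^ 6)) := by
        calc 1 / ε ^ 18 / 4
            = Real.exp (β * (ε ^ 3 + ε ^ 6)) / 2 * (Real.exp (β * (ε ^ 3 - ε ^ 6)) / 2) := by
              rw [← hexpAB]; ring
          _ ≤ _ := hcc
      have hε18 : ε ^ 18 ≤ 1 := pow_le_one₀ h0.le h1.le
      have hgoal : (10:ℝ) ≤ 20 * ε ^ 3 * (1 / ε ^ 18 / 4 * (2 * ε ^ 6)) := by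
        have : 20 * ε ^ 3 * (1 / ε ^ 18 / 4 * (2 * ε ^ 6)) = 10 / ε ^ 9 := by
          field_simp; ring
        rw [this, le_div_iff₀ (by positivity)]
        nlinarith [pow_le_one₀ h0.le h1.le (n := 9)]
      calc (10:ℝ) ≤ 20 * ε ^ 3 * (1 / ε ^ 18 / 4 * (2 * ε ^ 6)) := hgoal
        _ ≤ _ := by
            apply mul_le_mul_of_nonneg_left _ (by positivity)
            apply mul_le_mul_of_nonneg_right hcc' (by positivity)
    calc Real.sinh (2 * β * ε ^ 6) ≤ 10 := hsinh10
      _ ≤ _ := hD10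
  -- part 3 : β σ'(β ε³) ≤ ε³
  have hβε3 : β * ε ^ 3 = 9 * L := by rw [hβ]; field_simp
  have hkey : 36 * L * ε ^ 12 ≤ 1 + 2 * ε ^ 18 := by
    have h1' : 36 * L * ε ^ 12 ≤ 20 / 9 * ε ^ 6 := by
      have : 36 * L * ε ^ 12 = 6 * ε ^ 6 * (6 * L * ε ^ 6) := by ring
      rw [this]
      calc 6 * ε ^ 6 * (6 * L * ε ^ 6) ≤ 6 * ε ^ 6 * (10 / 27) := by
            apply mul_le_mul_of_nonneg_left (le_trans h6L hinv_e) (by positivity)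
        _ = 20 / 9 * ε ^ 6 := by ring
    have h2' := cubic_aux (ε ^ 6) hε6.le (pow_le_one₀ h0.le h1.le)
    rw [show ((ε ^ 6) ^ 3 : ℝ) = ε ^ 18 by ring] at h2'
    linarith
  have hσnn : 0 ≤ 1 - Real.tanh (β * ε ^ 3) ^ 2 := by
    rw [one_sub_tanh_sq]
    positivity
  have part3 : β * (1 - Real.tanh (β * ε ^ 3) ^ 2) ≤ ε ^ 3 := by
    rw [hβε3, one_sub_tanh_sq, hβ]
    have hC : Real.cosh (9 * L) = (1 + ε ^ 18) / (2 * ε ^ 9) := by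
      rw [Real.cosh_eq]
      have hp : Real.exp (9 * L) = 1 / ε ^ 9 := by
        have := hexpk 9; push_cast at this; exact this
      have hm : Real.exp (-(9 * L)) = ε ^ 9 := by
        rw [Real.exp_neg, hp]; field_simp
      rw [hp, hm]; field_simp
    rw [hC]
    have hkey' : 36 * L * ε ^ 12 ≤ (1 + ε ^ 18) ^ 2 := by
      nlinarith [hkey, sq_nonneg (ε ^ 18)]
    have hden : (0:ℝ) < (1 + ε ^ 18) ^ 2 := by positivity
    calc 9 * L / ε ^ 3 * (1 / ((1 + ε ^ 18) / (2 * ε ^ 9)) ^ 2)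
        = (36 * L * ε ^ 12) * (ε ^ 3 / (1 + ε ^ 18) ^ 2) := by
          field_simp
          ring
      _ ≤ ((1 + ε ^ 18) ^ 2) * (ε ^ 3 / (1 + ε ^ 18) ^ 2) :=
          mul_le_mul_of_nonneg_right hkey' (by positivity)
      _ = ε ^ 3 := by field_simp
  have hprod : 0 ≤ β * (1 - Real.tanh (β * ε ^ 3) ^ 2) := mul_nonneg hβpos.le hσnn
  exact ⟨part1, by linarith, by linarith⟩
end

section
/- Let a, b ∈ ℝ with a < b, σ = tanh, 0 < ε ≤ b − a, β > 0, and t ∈ [a,b]. Let A = [a,b] ∩ [t−ε, t+ε]. Then β ∫_A σ'(β(t−s)) ds ≥ σ(βε) and β ∫_A σ'(β(t−s)) ds ≤ 2. -/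
open MeasureTheory

private lemma tanh_hasDerivAt (x : ℝ) :
    HasDerivAt Real.tanh (1 - Real.tanh x ^ 2) x := by
  have h := (Real.hasDerivAt_sinh x).div (Real.hasDerivAt_cosh x) (Real.cosh_pos x).ne'
  have heq : (fun y => Real.sinh y / Real.cosh y) = Real.tanh := by
    funext y; rw [Real.tanh_eq_sinh_div_cosh]
  rw [show (Real.sinh / Real.cosh) = fun y => Real.sinh y / Real.cosh y from rfl, heq] at h
  refine h.congr_deriv ?_
  have hc := (Real.cosh_pos x).ne'
  rw [Real.tanh_eq_sinh_div_cosh]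
  have hsq := Real.cosh_sq_sub_sinh_sq x
  field_simp

private lemma tanh_mono {x y : ℝ} (h : x ≤ y) : Real.tanh x ≤ Real.tanh y := by
  rw [Real.tanh_eq_sinh_div_cosh, Real.tanh_eq_sinh_div_cosh,
    div_le_div_iff₀ (Real.cosh_pos x) (Real.cosh_pos y)]
  have h1 : 0 ≤ Real.sinh (y - x) := Real.sinh_nonneg_iff.mpr (by linarith)
  have h2 := Real.sinh_sub y x
  nlinarith

private lemma tanh_lt_one' (x : ℝ) : Real.tanh x < 1 := by
  rw [Real.tanh_eq_sinh_div_cosh, div_lt_one (Real.cosh_pos x)]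
  have := Real.cosh_sub_sinh x
  have := Real.exp_pos (-x)
  linarith

private lemma neg_one_lt_tanh' (x : ℝ) : -1 < Real.tanh x := by
  have := tanh_lt_one' (-x)
  rw [Real.tanh_neg] at this
  linarith

private lemma tanh_nonneg' {x : ℝ} (h : 0 ≤ x) : 0 ≤ Real.tanh x := by
  have := tanh_mono h
  simpa [Real.tanh_zero] using this

private lemma tanh_subadd {x y : ℝ} (hx : 0 ≤ x) (hy : 0 ≤ y) :
    Real.tanh (x + y) ≤ Real.tanh x + Real.tanh y := by
  rw [Real.tanh_eq_sinh_div_cosh, Real.tanh_eq_sinh_div_cosh, Real.tanh_eq_sinh_div_cosh]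
  have hcx := Real.cosh_pos x
  have hcy := Real.cosh_pos y
  have hcxy := Real.cosh_pos (x + y)
  have hsx : 0 ≤ Real.sinh x := Real.sinh_nonneg_iff.mpr hx
  have hsy : 0 ≤ Real.sinh y := Real.sinh_nonneg_iff.mpr hy
  have hsxy : 0 ≤ Real.sinh (x + y) := Real.sinh_nonneg_iff.mpr (by linarith)
  have hca := Real.cosh_add x y
  have hsa := Real.sinh_add x y
  rw [div_le_iff₀ hcxy, add_mul, div_mul_eq_mul_div, div_mul_eq_mul_div,
    div_add_div _ _ hcx.ne' hcy.ne', le_div_iff₀ (by positivity), hsa, hca]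
  nlinarith [mul_nonneg (mul_nonneg hsx hsy)
    (add_nonneg (mul_nonneg hsx hcy.le) (mul_nonneg hcx.le hsy))]

/-- for `σ = tanh`, `0 < ε ≤ b - a`, `β > 0`, `t ∈ [a,b]` and
`A = [a,b] ∩ [t-ε, t+ε]`, the mass `β ∫_A σ'(β(t-s)) ds` lies between `σ(βε)` and `2`,
where `σ'(y) = 1 - tanh(y)²`. -/
theorem mollifier_mass_bounds (a b ε β t : ℝ) (hab : a < b) (hε0 : 0 < ε)
    (hε : ε ≤ b - a) (hβ : 0 < β) (ht : t ∈ Set.Icc a b) :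
    Real.tanh (β * ε) ≤
        β * ∫ s in Set.Icc a b ∩ Set.Icc (t - ε) (t + ε),
          (1 - Real.tanh (β * (t - s)) ^ 2) ∧
      β * ∫ s in Set.Icc a b ∩ Set.Icc (t - ε) (t + ε),
          (1 - Real.tanh (β * (t - s)) ^ 2) ≤ 2 := by
  obtain ⟨hta, htb⟩ := ht
  set l := max a (t - ε) with hl
  set u := min b (t + ε) with hu
  have hlt : l ≤ t := max_le hta (by linarith)
  have htu : t ≤ u := le_min htb (by linarith)
  have hlu : l ≤ u := hlt.trans htu
  have hset : Set.Icc a b ∩ Set.Icc (t - ε) (t + ε) = Set.Icc l u := Set.Icc_inter_Icc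
  rw [hset]
  have htanh : Continuous Real.tanh := by
    have h : Real.tanh = fun x => Real.sinh x / Real.cosh x :=
      funext fun x => Real.tanh_eq_sinh_div_cosh x
    rw [h]
    exact Real.continuous_sinh.div Real.continuous_cosh fun x => (Real.cosh_pos x).ne'
  have hcont : Continuous fun s : ℝ => 1 - Real.tanh (β * (t - s)) ^ 2 :=
    continuous_const.sub ((htanh.comp
      (continuous_const.mul (continuous_const.sub continuous_id))).pow 2)
  have hderiv : ∀ x ∈ Set.uIcc l u,
      HasDerivAt (fun s => -Real.tanh (β * (t - s)) / β)
        (1 - Real.tanh (β * (t - x)) ^ 2) x := by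
    intro x _
    have h1 : HasDerivAt (fun s : ℝ => β * (t - s)) (-β) x := by
      simpa using ((hasDerivAt_id x).const_sub t).const_mul β
    have h2 : HasDerivAt (fun s => Real.tanh (β * (t - s)))
        ((1 - Real.tanh (β * (t - x)) ^ 2) * (-β)) x :=
      by have := (tanh_hasDerivAt (β * (t - x))).comp x h1; exact this
    have h3 := (h2.neg).div_const β
    refine h3.congr_deriv ?_
    rw [mul_neg, neg_neg, mul_div_assoc, div_self hβ.ne', mul_one]
  have hInt : ∫ s in Set.Icc l u, (1 - Real.tanh (β * (t - s)) ^ 2)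
      = -Real.tanh (β * (t - u)) / β - -Real.tanh (β * (t - l)) / β := by
    rw [MeasureTheory.integral_Icc_eq_integral_Ioc, ← intervalIntegral.integral_of_le hlu]
    exact intervalIntegral.integral_eq_sub_of_hasDerivAt hderiv
      (hcont.intervalIntegrable _ _)
  have hval : β * ∫ s in Set.Icc l u, (1 - Real.tanh (β * (t - s)) ^ 2)
      = Real.tanh (β * (t - l)) - Real.tanh (β * (t - u)) := by
    rw [hInt]; field_simp; ring
  rw [hval]
  constructor
  · -- lower bound
    by_cases h1 : a ≤ t - ε
    · have hl' : l = t - ε := max_eq_right h1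
      have : Real.tanh (β * (t - u)) ≤ 0 := by
        have : β * (t - u) ≤ 0 := by nlinarith
        have := tanh_nonneg' (x := -(β * (t - u))) (by linarith)
        rw [Real.tanh_neg] at this; linarith
      rw [hl']
      have : t - (t - ε) = ε := by ring
      rw [this]
      linarith
    · push_neg at h1
      have hl' : l = a := max_eq_left (by linarith)
      by_cases h2 : t + ε ≤ b
      · have hu' : u = t + ε := min_eq_right h2
        rw [hl', hu']
        have he : β * (t - (t + ε)) = -(β * ε) := by ring
        rw [he, Real.tanh_neg]
        have : 0 ≤ Real.tanh (β * (t - a)) := tanh_nonneg' (by nlinarith)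
        linarith
      · push_neg at h2
        have hu' : u = b := min_eq_left (by linarith)
        rw [hl', hu']
        have hx : (0:ℝ) ≤ β * (t - a) := by nlinarith
        have hy : (0:ℝ) ≤ β * (b - t) := by nlinarith
        have hsum := tanh_subadd hx hy
        have hs : β * (t - a) + β * (b - t) = β * (b - a) := by ring
        rw [hs] at hsum
        have hmono : Real.tanh (β * ε) ≤ Real.tanh (β * (b - a)) :=
          tanh_mono (by nlinarith)
        have he : β * (t - b) = -(β * (b - t)) := by ring
        rw [he, Real.tanh_neg]
        linarith
  · have h1 := tanh_lt_one' (β * (t - l))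
    have h2 := neg_one_lt_tanh' (β * (t - u))
    linarith
end
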